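/- Let ρ and σ be quantum states on ℂ^d, each of rank at most r. Then there exists a Hermitian matrix O ∈ ℂ^{d×d} with 0 ⪯ O ⪯ I_d, rank(O) ≤ 2r, ‖O‖_HS ≤ √(2r), and Tr(O(ρ − σ)) = ‖ρ − σ‖_Tr. -/

import Mathlib

open Matrix
open scoped ComplexOrder

noncomputable section

/-- Trace norm of a complex matrix: sum of its singular values. -/
def traceNorm {d : ℕ} (A : Matrix (Fin d) (Fin d) ℂ) : ℝ :=
  ∑ i, Real.sqrt ((Matrix.isHermitian_conjTranspose_mul_self A).eigenvalues i)

/-- Trace distance between quantum states: `‖ρ − σ‖_Tr = (1/2)‖ρ − σ‖₁`. -/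
def traceDist {d : ℕ} (ρ σ : Matrix (Fin d) (Fin d) ℂ) : ℝ :=
  traceNorm (ρ - σ) / 2

/-- Hilbert–Schmidt (Frobenius) norm `√(Tr(A†A))`. -/
def hsNorm {d : ℕ} (A : Matrix (Fin d) (Fin d) ℂ) : ℝ :=
  Real.sqrt (((Aᴴ * A).trace).re)

private lemma rank_sub_le' {d : ℕ} (A B : Matrix (Fin d) (Fin d) ℂ) :
    (A - B).rank ≤ A.rank + B.rank := by
  have h : LinearMap.range (A - B).mulVecLin ≤
      LinearMap.range A.mulVecLin ⊔ LinearMap.range B.mulVecLin := by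
    rintro x ⟨v, rfl⟩
    have h2 : (A - B).mulVecLin v = A.mulVecLin v - B.mulVecLin v := by
      simp [Matrix.mulVecLin_apply, Matrix.sub_mulVec]
    rw [h2]
    exact Submodule.sub_mem _
      (Submodule.mem_sup_left ⟨v, rfl⟩) (Submodule.mem_sup_right ⟨v, rfl⟩)
  calc (A - B).rank ≤ Module.finrank ℂ
        (LinearMap.range A.mulVecLin ⊔ LinearMap.range B.mulVecLin : Submodule ℂ (Fin d → ℂ)) :=
        Submodule.finrank_mono h
    _ ≤ A.rank + B.rank := Submodule.finrank_add_le_finrank_add_finrank _ _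

set_option maxHeartbeats 1000000 in
/-- Existence of the Holevo–Helstrom observable for two rank-`≤ r` states `ρ, σ`:
a Hermitian `O` with `0 ⪯ O ⪯ I`, `rank O ≤ 2r`, `‖O‖_HS ≤ √(2r)`, and
`Tr(O(ρ − σ)) = ‖ρ − σ‖_Tr`. -/
theorem exists_holevo_helstrom (d r : ℕ) (hd : 0 < d)
    (ρ σ : Matrix (Fin d) (Fin d) ℂ)
    (hρ : ρ.PosSemidef) (hρtr : ρ.trace = 1) (hρr : ρ.rank ≤ r)
    (hσ : σ.PosSemidef) (hσtr : σ.trace = 1) (hσr : σ.rank ≤ r) :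
    ∃ O : Matrix (Fin d) (Fin d) ℂ,
      O.IsHermitian ∧
      O.PosSemidef ∧
      ((1 : Matrix (Fin d) (Fin d) ℂ) - O).PosSemidef ∧
      O.rank ≤ 2 * r ∧
      hsNorm O ≤ Real.sqrt (2 * r) ∧
      (O * (ρ - σ)).trace = ((traceDist ρ σ : ℝ) : ℂ) := by
  set A : Matrix (Fin d) (Fin d) ℂ := ρ - σ with hAdef
  have hA : A.IsHermitian := hρ.1.sub hσ.1
  set V : Matrix (Fin d) (Fin d) ℂ := (hA.eigenvectorUnitary : Matrix (Fin d) (Fin d) ℂ)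
    with hVdef
  have hVsV : star V * V = 1 := Matrix.mem_unitaryGroup_iff'.mp hA.eigenvectorUnitary.2
  have hVVs : V * star V = 1 := Matrix.mem_unitaryGroup_iff.mp hA.eigenvectorUnitary.2
  set lam : Fin d → ℝ := hA.eigenvalues with hlamdef
  have hspec : A = V * diagonal (fun i => (lam i : ℂ)) * star V := by
    exact hA.spectral_theorem
  -- conjugation helpers
  have key : ∀ D E : Fin d → ℂ,
      (V * diagonal D * star V) * (V * diagonal E * star V)
        = V * diagonal (fun i => D i * E i) * star V := by
    intro D E
    calc (V * diagonal D * star V) * (V * diagonal E * star V)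
        = V * diagonal D * (star V * V) * diagonal E * star V := by
          simp only [mul_assoc]
      _ = V * (diagonal D * diagonal E) * star V := by
          rw [hVsV]; simp only [mul_one, mul_assoc]
      _ = V * diagonal (fun i => D i * E i) * star V := by
          rw [diagonal_mul_diagonal]
  have tr : ∀ D : Fin d → ℂ, (V * diagonal D * star V).trace = ∑ i, D i := by
    intro D
    rw [Matrix.trace_mul_cycle, hVsV, one_mul, trace_diagonal]
  have conjPSD : ∀ D : Fin d → ℝ, (∀ i, 0 ≤ D i) →
      (V * diagonal (fun i => (D i : ℂ)) * star V).PosSemidef := by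
    intro D hD
    have h1 : (diagonal (fun i => (D i : ℂ))).PosSemidef := by
      rw [posSemidef_diagonal_iff]
      intro i
      exact_mod_cast Complex.zero_le_real.mpr (hD i)
    exact h1.mul_mul_conjTranspose_same V
  set P : Fin d → ℝ := fun i => if 0 < lam i then 1 else 0 with hPdef
  set O : Matrix (Fin d) (Fin d) ℂ := V * diagonal (fun i => (P i : ℂ)) * star V with hOdef
  have hOpsd : O.PosSemidef := conjPSD P (fun i => by simp only [hPdef]; split <;> norm_num)
  have hOne : (1 : Matrix (Fin d) (Fin d) ℂ) = V * diagonal (fun _ => (1:ℂ)) * star V := by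
    rw [diagonal_one, mul_one, hVVs]
  have hsubpsd : ((1 : Matrix (Fin d) (Fin d) ℂ) - O).PosSemidef := by
    have h : (1 : Matrix (Fin d) (Fin d) ℂ) - O
        = V * diagonal (fun i => ((1 - P i : ℝ) : ℂ)) * star V := by
      rw [hOne, hOdef, ← sub_mul, ← Matrix.mul_sub, diagonal_sub]
      have hd2 : (fun i => (1:ℂ) - ((P i : ℝ) : ℂ)) = fun i => ((1 - P i : ℝ) : ℂ) := by
        funext i; push_cast; ring
      rw [hd2]
    rw [h]
    exact conjPSD _ (fun i => by simp only [hPdef]; split <;> norm_num)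
  -- rank
  have hdetV : IsUnit V.det := by
    apply IsUnit.of_mul_eq_one (star V).det
    rw [← det_mul, hVVs, det_one]
  have hdetVs : IsUnit (star V).det := by
    apply IsUnit.of_mul_eq_one V.det
    rw [← det_mul, hVsV, det_one]
  set N : ℕ := Fintype.card {i // 0 < lam i} with hNdef
  have hrankO : O.rank = N := by
    rw [hOdef, rank_mul_eq_left_of_isUnit_det _ _ hdetVs,
      rank_mul_eq_right_of_isUnit_det _ _ hdetV, rank_diagonal, hNdef]
    apply Fintype.card_congr
    apply Equiv.subtypeEquivRight
    intro i
    simp only [hPdef]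
    constructor
    · intro h; by_contra hc; simp [hc] at h
    · intro h; simp [h]
  have hNle : N ≤ 2 * r := by
    have h1 : N ≤ Fintype.card {i // lam i ≠ 0} :=
      Fintype.card_subtype_mono _ _ (fun i hi => ne_of_gt hi)
    have h2 : A.rank = Fintype.card {i // lam i ≠ 0} := hA.rank_eq_card_non_zero_eigs
    have h3 : A.rank ≤ ρ.rank + σ.rank := rank_sub_le' ρ σ
    omega
  have hrank : O.rank ≤ 2 * r := by rw [hrankO]; exact hNle
  -- trace of O
  have hsumP : ∑ i, P i = (N : ℝ) := by
    simp only [hPdef]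
    rw [Finset.sum_boole, hNdef, Fintype.card_subtype]
  have htrO : O.trace = (N : ℂ) := by
    rw [hOdef, tr, ← Complex.ofReal_sum, hsumP]
    norm_num
  -- Hilbert-Schmidt norm
  have hOO : Oᴴ * O = O := by
    rw [hOpsd.1, hOdef, key]
    have hPP : (fun i => ((P i : ℝ) : ℂ) * ((P i : ℝ) : ℂ)) = fun i => ((P i : ℝ) : ℂ) := by
      funext i; simp only [hPdef]; split <;> norm_num
    rw [hPP]
  have hhs : hsNorm O ≤ Real.sqrt (2 * r) := by
    rw [hsNorm, hOO, htrO]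
    apply Real.sqrt_le_sqrt
    simp only [Complex.natCast_re]
    exact_mod_cast hNle
  -- trace norm of A equals sum of |lam i|
  have hB : (Aᴴ * A).PosSemidef := Matrix.posSemidef_conjTranspose_mul_self A
  set M : Matrix (Fin d) (Fin d) ℂ := V * diagonal (fun i => ((|lam i| : ℝ) : ℂ)) * star V with hMdef
  have hMpsd : M.PosSemidef := conjPSD _ (fun i => abs_nonneg _)
  have hMsq : M ^ 2 = Aᴴ * A := by
    have habs : (fun i => ((|lam i| : ℝ) : ℂ) * ((|lam i| : ℝ) : ℂ))
        = fun i => ((lam i : ℝ) : ℂ) * ((lam i : ℝ) : ℂ) := by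
      funext i
      rw [← Complex.ofReal_mul, ← Complex.ofReal_mul, abs_mul_abs_self]
    rw [pow_two, hMdef, key, habs, hA.eq, hspec, key]
  open MatrixOrder in
  have hMeq : M = CFC.sqrt (Aᴴ * A) :=
    (CFC.sqrt_unique (by rw [← pow_two]; exact hMsq) hMpsd.nonneg).symm
  open MatrixOrder in
  have htrsqrt : (CFC.sqrt (Aᴴ * A)).trace =
      ((∑ i, Real.sqrt ((Matrix.isHermitian_conjTranspose_mul_self A).eigenvalues i) : ℝ) : ℂ) := by
    rw [CFC.sqrt_eq_cfc, cfc_nnreal_eq_real _ _ hB.nonneg, hB.1.cfc_eq, IsHermitian.cfc,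
      Unitary.conjStarAlgAut_apply, Matrix.trace_mul_cycle,
      Matrix.mem_unitaryGroup_iff'.mp hB.1.eigenvectorUnitary.2, one_mul, trace_diagonal]
    push_cast
    refine Finset.sum_congr rfl fun i _ => ?_
    simp
    congr 1
    exact max_eq_left (hB.eigenvalues_nonneg i)
  have htrM : traceNorm A = ∑ i, |lam i| := by
    have h1 : M.trace = ((∑ i, |lam i| : ℝ) : ℂ) := by
      rw [hMdef, tr, Complex.ofReal_sum]
    rw [hMeq, htrsqrt] at h1
    rw [traceNorm]
    exact_mod_cast h1
  -- sum of eigenvalues is zero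
  have hsumlam : ∑ i, lam i = 0 := by
    have h1 : A.trace = ((∑ i, lam i : ℝ) : ℂ) := by
      rw [hspec, tr, Complex.ofReal_sum]
    have h2 : A.trace = 0 := by
      rw [hAdef, Matrix.trace_sub, hρtr, hσtr, sub_self]
    rw [h2] at h1
    symm
    exact_mod_cast h1
  -- final trace identity
  have hfinal : (O * A).trace = ((traceDist ρ σ : ℝ) : ℂ) := by
    rw [hOdef, hspec, key, tr]
    have h1 : ∀ i, (P i : ℂ) * (lam i : ℂ) = (((|lam i| + lam i) / 2 : ℝ) : ℂ) := by
      intro i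
      simp only [hPdef]
      split
      · next h => rw [abs_of_pos h]; push_cast; ring
      · next h =>
        rw [abs_of_nonpos (not_lt.mp h)]
        push_cast
        ring
    simp only [h1]
    rw [← Complex.ofReal_sum]
    congr 1
    rw [traceDist, ← hAdef, htrM]
    rw [← Finset.sum_div, Finset.sum_add_distrib, hsumlam, add_zero]
  exact ⟨O, hOpsd.1, hOpsd, hsubpsd, hrank, hhs, hfinal⟩

end
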